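/- arXiv:0906.4332 — 2 statements merged into one kernel-verified Lean document; each statement's English description precedes it below -/
import Mathlib

section
/- If Upd is a family of update functions satisfying P1 and P2, and Upd(Pr,B) is a singleton {Pr'}, then Pr' equals the conditional measure Pr(·|B). (Van Fraassen's theorem in this framework.) -/
open MeasureTheory ProbabilityTheory Set
open scoped Classical NNReal ENNReal

noncomputable section

/-- A family of update functions, one for each measure space. -/
abbrev UpdFamily : Type 1 :=
  ∀ (W : Type) [MeasurableSpace W],
    Set (ProbabilityMeasure W) → Set W → Set (ProbabilityMeasure W)

/-- Base condition: `Upd(X,B) = ∅` whenever every measure in `X` gives `B` probability 0. -/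
def UpdBase (U : UpdFamily) : Prop :=
  ∀ (W : Type) [MeasurableSpace W] (X : Set (ProbabilityMeasure W)) (B : Set W),
    (∀ μ ∈ X, μ B = 0) → U W X B = ∅

/-- The conditional probability `Pr(A|B) = Pr(A ∩ B)/Pr(B)`. -/
def condProb {W : Type} [MeasurableSpace W] (μ : ProbabilityMeasure W) (A B : Set W) : ℝ≥0 :=
  μ (A ∩ B) / μ B

/-- The conditional probability measure `Pr(·|B)` (defined when `Pr(B) > 0`). -/
def condPM {W : Type} [MeasurableSpace W] (μ : ProbabilityMeasure W) (B : Set W) :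
    ProbabilityMeasure W :=
  if h : (μ : Measure W) B ≠ 0 then
    ⟨(μ : Measure W)[|B], cond_isProbabilityMeasure h⟩
  else μ

/-- Pushforward of a probability measure along a measurable map (`f*`). -/
def pushPM {W W' : Type} [MeasurableSpace W] [MeasurableSpace W']
    {f : W → W'} (hf : Measurable f) (μ : ProbabilityMeasure W) : ProbabilityMeasure W' :=
  μ.map hf.aemeasurable

/-- P1: every measure in `Upd(X,B)` assigns probability 1 to `B`. -/
def P1 (U : UpdFamily) : Prop :=
  ∀ (W : Type) [MeasurableSpace W] (X : Set (ProbabilityMeasure W)) (B : Set W),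
    MeasurableSet B → ∀ μ ∈ U W X B, μ B = 1

/-- P2: representation independence under measurable surjections. -/
def P2 (U : UpdFamily) : Prop :=
  ∀ (W W' : Type) [MeasurableSpace W] [MeasurableSpace W'] (f : W → W')
    (hf : Measurable f), Function.Surjective f →
    ∀ (X : Set (ProbabilityMeasure W)) (B : Set W'), MeasurableSet B →
      U W' (pushPM hf '' X) B = pushPM hf '' (U W X (f ⁻¹' B))

/-- P3: compositionality of updating. -/
def P3 (U : UpdFamily) : Prop :=
  ∀ (W : Type) [MeasurableSpace W] (X : Set (ProbabilityMeasure W)) (B C : Set W),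
    MeasurableSet B → MeasurableSet C → U W (U W X B) C = U W X (B ∩ C)

/-- P4: trivial update on sure evidence. -/
def P4 (U : UpdFamily) : Prop :=
  ∀ (W : Type) [MeasurableSpace W] (X : Set (ProbabilityMeasure W)) (B : Set W),
    MeasurableSet B → (∀ μ ∈ X, μ B = 1) → U W X B = X

/-- P5: pointwise union decomposition. -/
def P5 (U : UpdFamily) : Prop :=
  ∀ (W : Type) [MeasurableSpace W] (X : Set (ProbabilityMeasure W)) (B : Set W),
    MeasurableSet B → U W X B = ⋃ μ ∈ X, U W {μ} B

/-- P6': singleton inputs yield at most one output measure. -/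
def P6' (U : UpdFamily) : Prop :=
  ∀ (W : Type) [MeasurableSpace W] (μ : ProbabilityMeasure W) (B : Set W),
    MeasurableSet B → (U W {μ} B).Subsingleton

/-- P6'': bounded amplification relative to conditioning. -/
def P6'' (U : UpdFamily) : Prop :=
  ∀ (W : Type) [MeasurableSpace W] (μ : ProbabilityMeasure W), ∃ c : ℝ≥0,
    ∀ (A B : Set W), MeasurableSet A → MeasurableSet B →
      ∀ ν ∈ U W {μ} B, ν A ≤ c * condProb μ A B

/-- P6: either P6' or P6'' holds. -/
def P6 (U : UpdFamily) : Prop := P6' U ∨ P6'' U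

/-- P7: some non-sure evidence yields a nonempty update. -/
def P7 (U : UpdFamily) : Prop :=
  ∃ (W : Type) (_ : MeasurableSpace W) (X : Set (ProbabilityMeasure W)) (B : Set W),
    MeasurableSet B ∧ (∀ μ ∈ X, μ B ≠ 1) ∧ U W X B ≠ ∅

/-- Conditioning: `Upd_cond(X,B) = {Pr(·|B) : Pr ∈ X, Pr(B) > 0}`. -/
def updCond {W : Type} [MeasurableSpace W] (X : Set (ProbabilityMeasure W)) (B : Set W) :
    Set (ProbabilityMeasure W) :=
  {ν | ∃ μ ∈ X, 0 < μ B ∧ ν = condPM μ B}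

/-- Constraining: `Upd_constrain(X,B) = {Pr ∈ X : Pr(B) = 1}`. -/
def updConstrain {W : Type} [MeasurableSpace W] (X : Set (ProbabilityMeasure W)) (B : Set W) :
    Set (ProbabilityMeasure W) := {μ ∈ X | μ B = 1}

end

/-!
By P2 a singleton update pushes forward along measurable surjections, so it suffices to study the
update of `ν = f_* Pr` on the countable label space of `w ↦ (w ∈ s, w ∈ B)`; let `a`, `b` be the
labels of `s ∩ B` and `B \ s`. On `UnitAddCircle × T` with `Q = volume ⊗ ν`, relabel the fibre over
`{a, b}` as `a` on a translate of a fixed set `I` of volume `ν {a} / ν {a, b}` and `b` off it. Each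
such relabelling pushes `Q` back to `ν`, so by P2 it maps a posterior `λ` of `Q` to the posterior
`ν'` of `ν`: all translates of `I` (over `{a, b}`) get the same `λ`-mass `ν' {a}`. Averaging over
the translations (Fubini against Haar measure) gives `ν' {a} = volume I * ν' {a, b}`, and P1 makes
`ν' {a, b} = Pr' B = 1`.
-/

lemma eq_measure_mul_of_forall_translate_eq {G : Type*} [MeasurableSpace G] [AddGroup G]
    [MeasurableAdd₂ G] (μ κ : Measure G) [IsProbabilityMeasure μ] [μ.IsAddLeftInvariant]
    [SFinite κ] {I : Set G} (hI : MeasurableSet I) {c : ℝ≥0∞}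
    (h : ∀ t, κ ((· + t) ⁻¹' I) = c) :
    c = μ I * κ univ := by
  have hM : MeasurableSet {p : G × G | p.2 + p.1 ∈ I} := (measurable_snd.add measurable_fst) hI
  calc c = ∫⁻ t, κ ((· + t) ⁻¹' I) ∂μ := by simp [h]
    _ = μ.prod κ {p | p.2 + p.1 ∈ I} := (Measure.prod_apply hM).symm
    _ = ∫⁻ s, μ ((s + ·) ⁻¹' I) ∂κ := Measure.prod_apply_symm hM
    _ = μ I * κ univ := by simp [measure_preimage_add]

instance : IsProbabilityMeasure (volume : Measure UnitAddCircle) := ⟨UnitAddCircle.measure_univ⟩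

lemma UnitAddCircle.exists_measurableSet_volume_eq {r : ℝ≥0∞} (hr : r ≤ 1) :
    ∃ I : Set UnitAddCircle, MeasurableSet I ∧ volume I = r ∧ I.Nonempty ∧ Iᶜ.Nonempty := by
  set h : UnitAddCircle := ((1 / 2 : ℝ) : UnitAddCircle)
  have hh : h ≠ 0 := by
    rw [← norm_ne_zero_iff, AddCircle.norm_half_period_eq]; norm_num
  -- removing the null point `h` keeps `Iᶜ` nonempty when `r = 1`
  refine ⟨Metric.closedBall 0 (r.toReal / 2) \ {h},
    measurableSet_closedBall.diff (measurableSet_singleton h), ?_,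
    ⟨0, by simp [hh.symm]; positivity⟩, ⟨h, by simp⟩⟩
  have hr' : r.toReal ≤ 1 := by simpa using ENNReal.toReal_mono ENNReal.one_ne_top hr
  have hpt : volume {h} = 0 := by
    simpa using AddCircle.volume_closedBall 1 (x := h) 0
  rw [measure_sdiff_null hpt, AddCircle.volume_closedBall, mul_div_cancel₀ _ two_ne_zero,
    min_eq_right hr', ENNReal.ofReal_toReal (ne_top_of_le_ne_top ENNReal.one_ne_top hr)]

section Relabel

variable {T : Type}

noncomputable def relabel (I : Set UnitAddCircle) (a b : T) (t : UnitAddCircle)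
    (p : UnitAddCircle × T) : T :=
  if p.2 ∈ ({a, b} : Set T) then (if p.1 + t ∈ I then a else b) else p.2

variable {I : Set UnitAddCircle} {a b : T}

lemma measurable_relabel [MeasurableSpace T] [MeasurableSingletonClass T] (hI : MeasurableSet I)
    (t : UnitAddCircle) : Measurable (relabel I a b t) :=
  Measurable.ite (measurable_snd ((measurableSet_singleton b).insert a))
    (Measurable.ite ((measurable_fst.add_const t) hI) measurable_const measurable_const)
    measurable_snd

lemma relabel_surjective (hI : I.Nonempty) (hI' : Iᶜ.Nonempty) (t : UnitAddCircle) :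
    Function.Surjective (relabel I a b t) := by
  obtain ⟨x, hx⟩ := hI
  obtain ⟨y, hy⟩ := hI'
  intro τ
  by_cases hτ : τ ∈ ({a, b} : Set T)
  · rcases hτ with rfl | rfl
    · exact ⟨(x - t, τ), by simp [relabel, hx]⟩
    · exact ⟨(y - t, a), by simp [relabel, show y ∉ I from hy]⟩
  · exact ⟨(0, τ), if_neg hτ⟩

lemma relabel_preimage_of_mem {D : Set T} (ha : a ∈ D) (hb : b ∈ D) (t : UnitAddCircle) :
    relabel I a b t ⁻¹' D = univ ×ˢ D := by
  ext ⟨c, σ⟩; simp only [mem_preimage, relabel]; split_ifs <;> aesop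

lemma relabel_preimage_left (hab : a ≠ b) (t : UnitAddCircle) :
    relabel I a b t ⁻¹' {a} = ((· + t) ⁻¹' I) ×ˢ {a, b} := by
  ext ⟨c, σ⟩; simp only [mem_preimage, relabel]; split_ifs <;> aesop

lemma relabel_preimage_right (hab : a ≠ b) (t : UnitAddCircle) :
    relabel I a b t ⁻¹' {b} = ((· + t) ⁻¹' I)ᶜ ×ˢ {a, b} := by
  ext ⟨c, σ⟩; simp only [mem_preimage, relabel]; split_ifs <;> aesop

lemma relabel_preimage_singleton_of_notMem {τ : T} (hτ : τ ∉ ({a, b} : Set T))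
    (t : UnitAddCircle) : relabel I a b t ⁻¹' {τ} = univ ×ˢ {τ} := by
  ext ⟨c, σ⟩; simp only [mem_preimage, relabel]; split_ifs <;> aesop

lemma map_relabel_volume_prod [MeasurableSpace T] [Countable T] [MeasurableSingletonClass T]
    {ν : Measure T} [IsFiniteMeasure ν] (hI : MeasurableSet I) (hab : a ≠ b)
    (hIν : volume I * ν {a, b} = ν {a}) (t : UnitAddCircle) :
    (volume.prod ν).map (relabel I a b t) = ν := by
  refine Measure.ext_of_singleton fun τ => ?_
  rw [Measure.map_apply (measurable_relabel hI t) (measurableSet_singleton τ)]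
  by_cases hτ : τ ∈ ({a, b} : Set T)
  · rcases hτ with rfl | rfl
    · rw [relabel_preimage_left hab, Measure.prod_prod, measure_preimage_add_right, hIν]
    · rw [relabel_preimage_right hab, Measure.prod_prod,
        prob_compl_eq_one_sub ((measurable_add_const t) hI), measure_preimage_add_right,
        ENNReal.sub_mul fun _ _ => measure_ne_top _ _, one_mul, hIν, insert_eq,
        measure_union (disjoint_singleton.2 hab) (measurableSet_singleton _),
        ENNReal.add_sub_cancel_left (measure_ne_top _ _)]
  · rw [relabel_preimage_singleton_of_notMem hτ, Measure.prod_prod, measure_univ, one_mul]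

end Relabel

lemma pushPM_apply {W T : Type} [MeasurableSpace W] [MeasurableSpace T] {f : W → T}
    (hf : Measurable f) (μ : ProbabilityMeasure W) {s : Set T} (hs : MeasurableSet s) :
    (pushPM hf μ : Measure T) s = (μ : Measure W) (f ⁻¹' s) := by
  rw [pushPM, ProbabilityMeasure.toMeasure_map, Measure.map_apply hf hs]

lemma toMeasure_condPM {W : Type} [MeasurableSpace W] {μ : ProbabilityMeasure W} {B : Set W}
    (h : (μ : Measure W) B ≠ 0) : (condPM μ B : Measure W) = (μ : Measure W)[|B] := by
  rw [show condPM μ B = ⟨(μ : Measure W)[|B], cond_isProbabilityMeasure h⟩ from dif_pos h]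
  rfl

section Updates

variable {U : UpdFamily}

lemma P2.update_pushPM {W T : Type} [MeasurableSpace W] [MeasurableSpace T] (h2 : P2 U)
    {f : W → T} (hf : Measurable f) (hfs : Function.Surjective f) {D : Set T}
    (hD : MeasurableSet D) {Pr Pr' : ProbabilityMeasure W}
    (hsing : U W {Pr} (f ⁻¹' D) = {Pr'}) :
    U T {pushPM hf Pr} D = {pushPM hf Pr'} := by
  simpa [hsing] using h2 W T f hf hfs {Pr} D hD

lemma P2.update_apply_singleton_eq_div_mul {T : Type} [MeasurableSpace T] [Countable T]
    [MeasurableSingletonClass T] (h2 : P2 U) {ν ν' : ProbabilityMeasure T} {D : Set T}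
    (hsing : U T {ν} D = {ν'}) {a b : T} (hab : a ≠ b) (ha : a ∈ D) (hb : b ∈ D) :
    (ν' : Measure T) {a} =
      (ν : Measure T) {a} / (ν : Measure T) {a, b} * (ν' : Measure T) {a, b} := by
  set r := (ν : Measure T) {a} / (ν : Measure T) {a, b}
  have hr : r ≤ 1 := ENNReal.div_le_of_le_mul (by simpa using measure_mono (by simp))
  obtain ⟨I, hI, hIr, hIne, hIcne⟩ := UnitAddCircle.exists_measurableSet_volume_eq hr
  have hIν : volume I * (ν : Measure T) {a, b} = (ν : Measure T) {a} :=
    hIr ▸ ENNReal.div_mul_cancel' (fun h => measure_mono_null (by simp) h)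
      (fun h => absurd h (measure_ne_top _ _))
  let Q : ProbabilityMeasure (UnitAddCircle × T) := ⟨volume.prod ν, inferInstance⟩
  have hg := measurable_relabel (a := a) (b := b) hI
  have hupd (t) : pushPM (hg t) '' U _ {Q} (univ ×ˢ D) = {ν'} := by
    have hQ : pushPM (hg t) Q = ν := ProbabilityMeasure.toMeasure_injective <| by
      rw [pushPM, ProbabilityMeasure.toMeasure_map]
      exact map_relabel_volume_prod hI hab hIν t
    rw [← relabel_preimage_of_mem ha hb t, ← h2 _ _ _ (hg t) (relabel_surjective hIne hIcne t) _ _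
      D.to_countable.measurableSet, image_singleton, hQ, hsing]
  obtain ⟨l, hl⟩ : (U _ {Q} (univ ×ˢ D)).Nonempty :=
    image_nonempty.1 ((hupd 0).symm ▸ singleton_nonempty ν')
  have hl' (t) : pushPM (hg t) l = ν' := (hupd t).subset (mem_image_of_mem _ hl)
  let κ := ((l : Measure (UnitAddCircle × T)).restrict (univ ×ˢ {a, b})).map Prod.fst
  have hκ {s} (hs : MeasurableSet s) : κ s = (l : Measure (UnitAddCircle × T)) (s ×ˢ {a, b}) := by
    rw [Measure.map_apply measurable_fst hs, Measure.restrict_apply (measurable_fst hs)]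
    congr 1; ext; simp
  have hκI (t) : κ ((· + t) ⁻¹' I) = (ν' : Measure T) {a} := by
    rw [hκ ((measurable_add_const t) hI), ← relabel_preimage_left hab, ← hl' t,
      pushPM_apply _ _ (measurableSet_singleton a)]
  have hκuniv : κ univ = (ν' : Measure T) {a, b} := by
    rw [hκ MeasurableSet.univ, ← relabel_preimage_of_mem (I := I) (a := a) (b := b)
      (D := {a, b}) (by simp) (by simp) 0, ← hl' 0,
      pushPM_apply _ _ (Set.to_countable _).measurableSet]
  rw [eq_measure_mul_of_forall_translate_eq volume κ hI hκI, hIr, hκuniv]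

lemma P2.update_apply_inter_eq_div_mul (h2 : P2 U) {W : Type} [MeasurableSpace W]
    {Pr Pr' : ProbabilityMeasure W} {B s : Set W} (hB : MeasurableSet B) (hs : MeasurableSet s)
    (hsing : U W {Pr} B = {Pr'}) (hPrB : (Pr : Measure W) B ≠ 0) :
    (Pr' : Measure W) (s ∩ B) =
      (Pr : Measure W) (s ∩ B) / (Pr : Measure W) B * (Pr' : Measure W) B := by
  rcases (s ∩ B).eq_empty_or_nonempty with hsB | ⟨u, hu⟩
  · simp [hsB]
  rcases (B \ s).eq_empty_or_nonempty with hBs | ⟨v, hv⟩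
  · rw [inter_eq_right.2 (sdiff_eq_empty.1 hBs), ENNReal.div_self hPrB (measure_ne_top _ _),
      one_mul]
  let f := rangeFactorization fun w => (w ∈ s, w ∈ B)
  have hf : Measurable f :=
    ((measurableSet_setOfPred.1 hs).prodMk (measurableSet_setOfPred.1 hB)).subtype_mk
  have hfD : f ⁻¹' {τ | τ.1.2} = B := rfl
  have hfa : f ⁻¹' {f u} = s ∩ B := by
    ext w; simp [f, rangeFactorization, Subtype.ext_iff, hu.1, hu.2]
  have hfab : f ⁻¹' {f u, f v} = B := by
    ext w; simp [f, rangeFactorization, Subtype.ext_iff, hu.1, hu.2, hv.1, hv.2]; tauto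
  have hab : f u ≠ f v := by
    simp [f, rangeFactorization, Subtype.ext_iff, hu.1, hu.2, hv.1, hv.2]
  have key := h2.update_apply_singleton_eq_div_mul
    (h2.update_pushPM hf rangeFactorization_surjective (by measurability) (hfD ▸ hsing))
    hab (show f u ∈ {τ | τ.1.2} from hu.2) (show f v ∈ {τ | τ.1.2} from hv.1)
  simpa only [pushPM_apply hf _ (Set.to_countable _).measurableSet, hfa, hfab] using key

end Updates

/-- van Fraassen's theorem: under P1 and P2, a singleton update must
be conditioning. -/
theorem stmt1 (U : UpdFamily) (hbase : UpdBase U) (h1 : P1 U) (h2 : P2 U)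
    (W : Type) [MeasurableSpace W] (Pr Pr' : ProbabilityMeasure W) (B : Set W)
    (hB : MeasurableSet B) (hsing : U W {Pr} B = {Pr'}) :
    Pr' = condPM Pr B := by
  have hPrB : (Pr : Measure W) B ≠ 0 := fun h => by
    simpa [hsing] using hbase W {Pr} B (by simpa using (Pr.null_iff_toMeasure_null B).2 h)
  have hPr'B : (Pr' : Measure W) B = 1 := by
    rw [← ProbabilityMeasure.ennreal_coeFn_eq_coeFn_toMeasure,
      h1 W {Pr} B hB Pr' (hsing ▸ rfl), ENNReal.coe_one]
  apply ProbabilityMeasure.toMeasure_injective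
  ext s hs
  rw [toMeasure_condPM hPrB, cond_apply hB, ← measure_inter_conull (t := B)
    (by rw [prob_compl_eq_one_sub hB, hPr'B, tsub_self]), h2.update_apply_inter_eq_div_mul hB hs
    hsing hPrB, hPr'B, mul_one, inter_comm, ENNReal.div_eq_inv_mul]
end

section
/- If Upd satisfies P1–P5 and there exist a measure space M, a probability measure Pr, and an event B with Pr(B) ≠ 0 such that Upd(Pr,B) = ∅, then Upd equals the constraining update function: Upd(X,B) = {Pr ∈ X : Pr(B) = 1} for all measure spaces, sets X of measures, and events B. -/
open MeasureTheory ProbabilityTheory Set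
open scoped Classical NNReal ENNReal

/-!
By `P2` along the map `w ↦ decide (w ∈ B)` to `Bool`, whether `U W {μ} B` is empty depends only
on `r = μ B` once `0 < r < 1`; call such an `r` empty (`UpdEmptyAt`). By `P3` and the base
condition, `U {μ} B = ∅` forces `U {μ} C = ∅` for `C ⊆ B`, so the empty values are closed
downwards. The crux is that `p` empty and `q² < p` make `q` empty: let `μ` put mass `q / N` on
each of `N` points forming `B` and `1 - q` elsewhere. If `τ ∈ U {μ} B`, some `K ≥ q N` of the
points carry `τ`-mass at least `K / N ≥ q`, while their `μ`-mass `K q / N < p` is empty; by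
`P3` and `P5` the update of `τ` on these points together with `Bᶜ` is empty, so their
`τ`-mass, and hence `q`, is empty. Thus the supremum of the empty values cannot lie below `1`,
and once every `r ∈ (0,1)` is empty, `P4`, `P5` and the base condition force `U` to constrain.
-/
namespace MeasureTheory.ProbabilityMeasure

variable {Ω : Type*} [MeasurableSpace Ω]

lemma apply_add_apply_compl (μ : ProbabilityMeasure Ω) {s : Set Ω} (hs : MeasurableSet s) :
    μ s + μ sᶜ = 1 := by
  rw [← ENNReal.coe_inj, ENNReal.coe_add, ennreal_coeFn_eq_coeFn_toMeasure,
    ennreal_coeFn_eq_coeFn_toMeasure, prob_add_prob_compl hs, ENNReal.coe_one]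

lemma nonempty_of_apply_ne_zero (μ : ProbabilityMeasure Ω) {s : Set Ω} (hs : μ s ≠ 0) :
    s.Nonempty :=
  nonempty_iff_ne_empty.2 fun h => hs (h ▸ μ.coeFn_empty)

lemma eq_of_apply_true_eq {μ ν : ProbabilityMeasure Bool} (h : μ {true} = ν {true}) : μ = ν := by
  have hfalse (ρ : ProbabilityMeasure Bool) : ρ {false} = 1 - ρ {true} := by
    rw [← ρ.apply_add_apply_compl (measurableSet_singleton true), Bool.compl_singleton,
      Bool.not_true, add_tsub_cancel_left]
  refine toMeasure_injective (Measure.ext_of_singleton fun b => ?_)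
  rw [← ennreal_coeFn_eq_coeFn_toMeasure, ← ennreal_coeFn_eq_coeFn_toMeasure]
  cases b <;> simp [hfalse, h]

lemma apply_finset [MeasurableSingletonClass Ω] (μ : ProbabilityMeasure Ω) (s : Finset Ω) :
    μ s = ∑ i ∈ s, μ {i} := by
  rw [← ENNReal.coe_inj, ENNReal.ofNNReal_finsetSum, ennreal_coeFn_eq_coeFn_toMeasure]
  simp only [ennreal_coeFn_eq_coeFn_toMeasure, sum_measure_singleton]

end MeasureTheory.ProbabilityMeasure

noncomputable def weightsPM (n : ℕ) (w : ℕ → ℝ≥0) (hw : ∑ i ∈ Finset.range n, w i = 1) :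
    ProbabilityMeasure ℕ :=
  ⟨(PMF.ofFinset (fun i => if i < n then (w i : ℝ≥0∞) else 0) (Finset.range n)
    (by rw [Finset.sum_congr rfl fun i hi => if_pos (Finset.mem_range.1 hi),
      ← ENNReal.ofNNReal_finsetSum, hw, ENNReal.coe_one])
    (fun i hi => if_neg (by simpa using hi))).toMeasure, inferInstance⟩

lemma weightsPM_apply_finset {n : ℕ} {w : ℕ → ℝ≥0} (hw : ∑ i ∈ Finset.range n, w i = 1)
    {A : Finset ℕ} (hA : A ⊆ Finset.range n) : weightsPM n w hw A = ∑ i ∈ A, w i := by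
  rw [← ENNReal.coe_inj, ProbabilityMeasure.ennreal_coeFn_eq_coeFn_toMeasure, weightsPM,
    ProbabilityMeasure.coe_mk, PMF.toMeasure_apply_finset, ENNReal.ofNNReal_finsetSum]
  exact Finset.sum_congr rfl fun i hi => by
    rw [PMF.ofFinset_apply, if_pos (Finset.mem_range.1 (hA hi))]

open Finset in
lemma Finset.exists_subset_card_eq_mul_sum_le {ι 𝕜 : Type*} [Field 𝕜] [LinearOrder 𝕜]
    [IsStrictOrderedRing 𝕜] (s : Finset ι) (t : ι → 𝕜) {k : ℕ} (hk : k ≤ #s) :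
    ∃ A ⊆ s, #A = k ∧ k * ∑ i ∈ s, t i ≤ #s * ∑ i ∈ A, t i := by
  classical
  induction k with
  | zero => exact ⟨∅, empty_subset s, card_empty, by simp⟩
  | succ k ih =>
    obtain ⟨A, hAs, hAk, hA⟩ := ih (Nat.le_of_succ_le hk)
    have hcard : #(s \ A) = #s - k := by rw [card_sdiff_of_subset hAs, hAk]
    obtain ⟨i, hi, hmax⟩ := (s \ A).exists_max_image t (card_pos.1 (by omega))
    have hrest : ∑ j ∈ s \ A, t j ≤ (#s - k : 𝕜) * t i := by
      have := sum_le_card_nsmul _ _ _ hmax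
      rwa [hcard, nsmul_eq_mul, Nat.cast_sub (by omega)] at this
    rw [mem_sdiff] at hi
    refine ⟨insert i A, insert_subset hi.1 hAs, by rw [card_insert_of_notMem hi.2, hAk], ?_⟩
    rw [← sum_sdiff hAs (f := t)] at hA ⊢
    rw [sum_insert hi.2]
    have hkn : (k : 𝕜) + 1 ≤ #s := by exact_mod_cast hk
    push_cast
    nlinarith [mul_le_mul_of_nonneg_left hA (sub_nonneg.2 hkn)]

lemma NNReal.exists_nat_ratio_of_mul_self_lt {p q : ℝ≥0} (hq0 : 0 < q) (hq1 : q ≤ 1)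
    (hqp : q * q < p) :
    ∃ N K : ℕ, 0 < N ∧ K ≤ N ∧ q * N ≤ K ∧ K * q < p * N := by
  obtain ⟨N, hN⟩ := exists_nat_gt (q / (p - q * q))
  have hN0 : (0 : ℝ≥0) < N := lt_of_le_of_lt zero_le hN
  rw [div_lt_iff₀ (tsub_pos_of_lt hqp)] at hN
  refine ⟨N, ⌈q * N⌉₊, by exact_mod_cast hN0, Nat.ceil_le.2 ?_, Nat.le_ceil _, ?_⟩
  · simpa using mul_le_mul_of_nonneg_right hq1 hN0.le
  calc (⌈q * N⌉₊ : ℝ≥0) * q < (q * N + 1) * q :=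
        mul_lt_mul_of_pos_right (Nat.ceil_lt_add_one zero_le) hq0
    _ = q * q * N + q := by ring
    _ < q * q * N + (p - q * q) * N := by gcongr; rwa [mul_comm]
    _ = p * N := by rw [← add_mul, add_tsub_cancel_of_le hqp.le]

def UpdEmptyAt (U : UpdFamily) (r : ℝ≥0) : Prop :=
  ∀ (W : Type) [MeasurableSpace W] (μ : ProbabilityMeasure W) (B : Set W),
    MeasurableSet B → μ B = r → U W {μ} B = ∅

section UpdFamily

variable {U : UpdFamily} {W : Type} [MeasurableSpace W]

lemma upd_singleton_of_apply_eq_one (h4 : P4 U) {μ : ProbabilityMeasure W} {B : Set W}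
    (hB : MeasurableSet B) (h : μ B = 1) : U W {μ} B = {μ} :=
  h4 W {μ} B hB fun _ hν => (mem_singleton_iff.1 hν) ▸ h

lemma apply_ne_one_of_upd_eq_empty (h4 : P4 U) {μ : ProbabilityMeasure W} {B : Set W}
    (hB : MeasurableSet B) (he : U W {μ} B = ∅) : μ B ≠ 1 := fun h =>
  singleton_ne_empty μ ((upd_singleton_of_apply_eq_one h4 hB h).symm.trans he)

lemma upd_singleton_subset (h5 : P5 U) {X : Set (ProbabilityMeasure W)}
    {μ : ProbabilityMeasure W} {B : Set W} (hB : MeasurableSet B) (hμ : μ ∈ X) :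
    U W {μ} B ⊆ U W X B := by
  rw [h5 W X B hB]
  exact subset_biUnion_of_mem (u := fun ν => U W {ν} B) hμ

lemma upd_eq_empty_of_subset (hbase : UpdBase U) (h3 : P3 U) {X : Set (ProbabilityMeasure W)}
    {B C : Set W} (hB : MeasurableSet B) (hC : MeasurableSet C) (hCB : C ⊆ B)
    (he : U W X B = ∅) : U W X C = ∅ := by
  rw [← inter_eq_right.2 hCB, ← h3 W X B C hB hC, he]
  exact hbase W ∅ C fun _ h => absurd h (notMem_empty _)

lemma exists_bool_upd_eq_empty_iff (h2 : P2 U) {μ : ProbabilityMeasure W} {B : Set W}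
    (hB : MeasurableSet B) (h0 : μ B ≠ 0) (h1 : μ B ≠ 1) :
    ∃ ν : ProbabilityMeasure Bool, ν {true} = μ B ∧
      (U Bool {ν} {true} = ∅ ↔ U W {μ} B = ∅) := by
  let f : W → Bool := fun w => decide (w ∈ B)
  have hpre : f ⁻¹' {true} = B := by ext; simp [f]
  have hf : Measurable f := measurable_to_bool (hpre ▸ hB)
  have hsurj : Function.Surjective f := by
    have hBc : μ Bᶜ ≠ 0 := fun h => h1 (by simpa [h] using μ.apply_add_apply_compl hB)
    rintro (_ | _)
    · obtain ⟨w, hw⟩ := μ.nonempty_of_apply_ne_zero hBc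
      exact ⟨w, by simpa [f] using hw⟩
    · obtain ⟨w, hw⟩ := μ.nonempty_of_apply_ne_zero h0
      exact ⟨w, by simpa [f] using hw⟩
  refine ⟨pushPM hf μ, by rw [pushPM, ProbabilityMeasure.map_apply _ _
    (measurableSet_singleton true), hpre], ?_⟩
  rw [← image_singleton, h2 W Bool f hf hsurj {μ} {true} (measurableSet_singleton true), hpre,
    image_eq_empty]

lemma updEmptyAt_of_upd_eq_empty (h2 : P2 U) {μ : ProbabilityMeasure W} {B : Set W}
    (hB : MeasurableSet B) (h0 : μ B ≠ 0) (h1 : μ B ≠ 1) (he : U W {μ} B = ∅) :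
    UpdEmptyAt U (μ B) := by
  obtain ⟨ν, hν, hiff⟩ := exists_bool_upd_eq_empty_iff h2 hB h0 h1
  intro W' _ μ' B' hB' hμ'
  obtain ⟨ν', hν', hiff'⟩ := exists_bool_upd_eq_empty_iff h2 hB' (hμ' ▸ h0) (hμ' ▸ h1)
  rw [← hiff', ProbabilityMeasure.eq_of_apply_true_eq (hν'.trans (hμ'.trans hν.symm))]
  exact hiff.2 he

lemma UpdEmptyAt.mono (hbase : UpdBase U) (h2 : P2 U) (h3 : P3 U) {p x : ℝ≥0}
    (hp : UpdEmptyAt U p) (hp1 : p ≤ 1) (hx0 : 0 < x) (hx1 : x < 1) (hxp : x ≤ p) :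
    UpdEmptyAt U x := by
  let w : ℕ → ℝ≥0 := fun i => if i = 0 then x else if i = 1 then p - x else 1 - p
  have hw : ∑ i ∈ Finset.range 3, w i = 1 := by
    simp [w, Finset.sum_range_succ, add_tsub_cancel_of_le hxp, add_tsub_cancel_of_le hp1]
  let μ := weightsPM 3 w hw
  have hμ01 : μ ↑({0, 1} : Finset ℕ) = p := by
    rw [weightsPM_apply_finset hw (by decide)]
    simp [w, add_tsub_cancel_of_le hxp]
  have hμ0 : μ ↑({0} : Finset ℕ) = x := by
    rw [weightsPM_apply_finset hw (by decide)]
    simp [w]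
  have he : U ℕ {μ} ↑({0} : Finset ℕ) = ∅ :=
    upd_eq_empty_of_subset hbase h3 .of_discrete .of_discrete (by simp)
      (hp ℕ μ _ .of_discrete hμ01)
  exact hμ0 ▸ updEmptyAt_of_upd_eq_empty h2 .of_discrete (hμ0 ▸ hx0.ne') (hμ0 ▸ hx1.ne) he

lemma updEmptyAt_of_mem_upd (h1 : P1 U) (h2 : P2 U) (h3 : P3 U) (h4 : P4 U) (h5 : P5 U)
    {μ τ : ProbabilityMeasure W} {B C : Set W} (hB : MeasurableSet B) (hC : MeasurableSet C)
    (hCB : C ⊆ B) (hτ : τ ∈ U W {μ} B) (hμC : U W {μ} C = ∅) (hτC : τ C ≠ 0) :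
    UpdEmptyAt U (τ C) := by
  have hD : MeasurableSet (C ∪ Bᶜ) := hC.union hB.compl
  have hBD : B ∩ (C ∪ Bᶜ) = C := by
    rw [inter_union_distrib_left, inter_compl_self, union_empty, inter_eq_right.2 hCB]
  have hτD : U W {τ} (C ∪ Bᶜ) = ∅ := subset_empty_iff.1 <| calc
    U W {τ} (C ∪ Bᶜ) ⊆ U W (U W {μ} B) (C ∪ Bᶜ) := upd_singleton_subset h5 hD hτ
    _ = ∅ := by rw [h3 W {μ} B _ hB hD, hBD, hμC]
  have hτBc : τ Bᶜ = 0 := by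
    simpa [h1 W {μ} B hB τ hτ] using τ.apply_add_apply_compl hB
  have hτD_eq : τ (C ∪ Bᶜ) = τ C :=
    le_antisymm (by simpa [hτBc] using τ.apply_union_le (s₁ := C) (s₂ := Bᶜ))
      (τ.apply_mono subset_union_left)
  rw [← hτD_eq] at hτC ⊢
  exact updEmptyAt_of_upd_eq_empty h2 hD hτC (apply_ne_one_of_upd_eq_empty h4 hD hτD) hτD

open Finset in
lemma UpdEmptyAt.of_mul_self_lt (hbase : UpdBase U) (h1 : P1 U) (h2 : P2 U) (h3 : P3 U)
    (h4 : P4 U) (h5 : P5 U) {p q : ℝ≥0} (hp : UpdEmptyAt U p) (hp1 : p ≤ 1) (hq0 : 0 < q)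
    (hq1 : q < 1) (hqp : q * q < p) : UpdEmptyAt U q := by
  obtain ⟨N, K, hN, hKN, hqK, hKp⟩ := NNReal.exists_nat_ratio_of_mul_self_lt hq0 hq1.le hqp
  have hN' : (N : ℝ≥0) ≠ 0 := by exact_mod_cast hN.ne'
  let w : ℕ → ℝ≥0 := fun i => if i < N then q / N else 1 - q
  have hw : ∑ i ∈ range (N + 1), w i = 1 := by
    simp [w, sum_range_succ, sum_ite_of_true fun i hi => mem_range.1 hi, mul_div_cancel₀ _ hN',
      add_tsub_cancel_of_le hq1.le]
  let μ := weightsPM (N + 1) w hw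
  have hμ (A : Finset ℕ) (hA : A ⊆ range N) : μ A = #A * q / N := by
    rw [weightsPM_apply_finset hw (hA.trans (range_subset_range.2 N.le_succ)),
      sum_congr rfl fun i hi => if_pos (mem_range.1 (hA hi)), sum_const, nsmul_eq_mul,
      mul_div_assoc]
  have hμB : μ (Finset.range N) = q := by
    rw [hμ _ subset_rfl, card_range, mul_div_cancel_left₀ _ hN']
  rcases eq_empty_or_nonempty (U ℕ {μ} (Finset.range N)) with he | ⟨τ, hτ⟩
  · exact hμB ▸ updEmptyAt_of_upd_eq_empty h2 .of_discrete (hμB ▸ hq0.ne') (hμB ▸ hq1.ne) he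
  have hτB : τ (Finset.range N) = 1 := h1 ℕ {μ} _ .of_discrete τ hτ
  obtain ⟨A, hAN, hAK, hAτ⟩ :=
    (range N).exists_subset_card_eq_mul_sum_le (fun i => (τ {i} : ℝ)) (k := K) (by simpa)
  have hqA : q ≤ τ A := by
    rw [← NNReal.coe_sum, ← NNReal.coe_sum, ← τ.apply_finset, ← τ.apply_finset, hτB,
      card_range] at hAτ
    have : q * N ≤ N * τ A := hqK.trans (by rw [← NNReal.coe_le_coe]; simpa using hAτ)
    exact le_of_mul_le_mul_left (by rwa [mul_comm]) (by positivity)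
  have hμA : U ℕ {μ} A = ∅ := by
    refine hp.mono hbase h2 h3 hp1 ?_ ?_ ?_ ℕ μ A .of_discrete rfl
    · rw [hμ A hAN, hAK]
      have hK : (0 : ℝ≥0) < K := hqK.trans_lt' (by positivity)
      positivity
    · exact (μ.apply_mono (Finset.coe_subset.2 hAN)).trans_lt (hμB ▸ hq1)
    · rw [hμ A hAN, hAK, div_le_iff₀ (by positivity)]
      exact hKp.le
  exact (updEmptyAt_of_mem_upd h1 h2 h3 h4 h5 .of_discrete .of_discrete
    (Finset.coe_subset.2 hAN) hτ hμA (hq0.trans_le hqA).ne').mono hbase h2 h3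
    (τ.apply_le_one _) hq0 hq1 hqA

lemma UpdEmptyAt.of_pos_of_lt_one (hbase : UpdBase U) (h1 : P1 U) (h2 : P2 U) (h3 : P3 U)
    (h4 : P4 U) (h5 : P5 U) {p : ℝ≥0} (hp : UpdEmptyAt U p) (hp0 : 0 < p) (hp1 : p ≤ 1)
    {q : ℝ≥0} (hq0 : 0 < q) (hq1 : q < 1) : UpdEmptyAt U q := by
  by_contra hq
  let S := {r | r ≤ 1 ∧ UpdEmptyAt U r}
  have hpS : p ∈ S := ⟨hp1, hp⟩
  have hSq (r : ℝ≥0) (hr : r ∈ S) : r < q :=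
    lt_of_not_ge fun hqr => hq (hr.2.mono hbase h2 h3 hr.1 hq0 hq1 hqr)
  have hbdd : BddAbove S := ⟨q, fun r hr => (hSq r hr).le⟩
  have hps : p ≤ sSup S := le_csSup hbdd hpS
  have hs1 : sSup S < 1 := (csSup_le ⟨p, hpS⟩ fun r hr => (hSq r hr).le).trans_lt hq1
  have hsqrt1 : NNReal.sqrt (sSup S) < 1 := by simpa using NNReal.sqrt_lt_sqrt.2 hs1
  have hs_sqrt : sSup S < NNReal.sqrt (sSup S) := by
    conv_lhs => rw [← NNReal.mul_self_sqrt (sSup S)]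
    exact mul_lt_of_lt_one_right (NNReal.sqrt_pos.2 (hp0.trans_le hps)) hsqrt1
  obtain ⟨r, hrs, hrsqrt⟩ := exists_between hs_sqrt
  obtain ⟨p', hp'S, hrp'⟩ := exists_lt_of_lt_csSup ⟨p, hpS⟩ <| calc
    r * r < NNReal.sqrt (sSup S) * NNReal.sqrt (sSup S) := mul_self_lt_mul_self zero_le hrsqrt
    _ = sSup S := NNReal.mul_self_sqrt _
  have hr1 : r < 1 := hrsqrt.trans hsqrt1
  have hrS : r ∈ S := ⟨hr1.le, hp'S.2.of_mul_self_lt hbase h1 h2 h3 h4 h5 hp'S.1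
    (zero_le.trans_lt hrs) hr1 hrp'⟩
  exact (le_csSup hbdd hrS).not_gt hrs

lemma upd_singleton_eq_ite (hbase : UpdBase U) (h4 : P4 U)
    (hU : ∀ r : ℝ≥0, 0 < r → r < 1 → UpdEmptyAt U r) (μ : ProbabilityMeasure W) {B : Set W}
    (hB : MeasurableSet B) : U W {μ} B = if μ B = 1 then {μ} else ∅ := by
  split_ifs with h
  · exact upd_singleton_of_apply_eq_one h4 hB h
  rcases (zero_le (a := μ B)).eq_or_lt with h0 | h0
  · exact hbase W {μ} B fun _ hν => (mem_singleton_iff.1 hν) ▸ h0.symm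
  · exact hU _ h0 ((μ.apply_le_one B).lt_of_ne h) W μ B hB rfl

end UpdFamily

/-- under P1–P5, an update function with some empty output on an event of
nonzero probability must be constraining. -/
theorem stmt10 (U : UpdFamily) (hbase : UpdBase U) (h1 : P1 U) (h2 : P2 U) (h3 : P3 U)
    (h4 : P4 U) (h5 : P5 U)
    (W : Type) [MeasurableSpace W] (Pr : ProbabilityMeasure W) (B : Set W)
    (hB : MeasurableSet B) (hBne : Pr B ≠ 0) (hempty : U W {Pr} B = ∅) :
    ∀ (W' : Type) [MeasurableSpace W'] (X : Set (ProbabilityMeasure W')) (B' : Set W'),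
      MeasurableSet B' → U W' X B' = updConstrain X B' := by
  intro W' _ X B' hB'
  have hU (r : ℝ≥0) (hr0 : 0 < r) (hr1 : r < 1) : UpdEmptyAt U r :=
    (updEmptyAt_of_upd_eq_empty h2 hB hBne (apply_ne_one_of_upd_eq_empty h4 hB hempty)
      hempty).of_pos_of_lt_one hbase h1 h2 h3 h4 h5 (pos_iff_ne_zero.2 hBne) (Pr.apply_le_one B)
      hr0 hr1
  ext ν
  simp [h5 W' X B' hB', upd_singleton_eq_ite hbase h4 hU _ hB', updConstrain, and_comm]
end
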